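/- Let P and Q be orthogonal projections on a complex Hilbert space H. Then the following are equivalent: (a) P − Q is invertible in B(H); (b) ‖P + Q − 1‖ < 1; (c) range(P) ∔ range(Q) = H, i.e., range(P) ∩ range(Q) = {0} and range(P) + range(Q) = H. -/

import Mathlib

/-- `P` is an orthogonal projection: idempotent and self-adjoint. -/
def IsOrthProjection {H : Type*} [NormedAddCommGroup H] [InnerProductSpace ℂ H]
    [CompleteSpace H] (P : H →L[ℂ] H) : Prop :=
  P ∘L P = P ∧ IsSelfAdjoint P

/-- Buckholtz's theorem: for orthogonal projections `P`, `Q` on a complex Hilbert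
space, the following are equivalent: `P - Q` is invertible; `‖P + Q - 1‖ < 1`;
`range P ∔ range Q = H`. -/
theorem buckholtz_tfae {H : Type*} [NormedAddCommGroup H] [InnerProductSpace ℂ H]
    [CompleteSpace H] (P Q : H →L[ℂ] H)
    (hP : IsOrthProjection P) (hQ : IsOrthProjection Q) :
    [IsUnit (P - Q),
     ‖P + Q - 1‖ < 1,
     IsCompl (LinearMap.range (P : H →ₗ[ℂ] H)) (LinearMap.range (Q : H →ₗ[ℂ] H))].TFAE := by
  obtain ⟨hP1, hP2⟩ := hP
  obtain ⟨hQ1, hQ2⟩ := hQ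
  have hPm : P * P = P := hP1
  have hQm : Q * Q = Q := hQ1
  set D := P - Q with hD
  set E := P + Q - 1 with hE
  have hDsa : IsSelfAdjoint D := hP2.sub hQ2
  have hEsa : IsSelfAdjoint E := (hP2.add hQ2).sub (IsSelfAdjoint.one _)
  have key : E * E = 1 - D * D := by
    rw [hD, hE]
    simp only [mul_sub, sub_mul, mul_add, add_mul, mul_one, one_mul, hPm, hQm]
    abel
  -- pointwise norm identity
  have hsq : ∀ (T : H →L[ℂ] H), IsSelfAdjoint T → ∀ x : H,
      (inner ℂ x ((T * T) x) : ℂ) = (‖T x‖ : ℂ) ^ 2 := by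
    intro T hT x
    have hadj : ContinuousLinearMap.adjoint T = T := by
      rw [← ContinuousLinearMap.star_eq_adjoint]; exact hT.star_eq
    calc (inner ℂ x ((T * T) x) : ℂ) = inner ℂ x (T (T x)) := by
          rw [ContinuousLinearMap.mul_apply]
      _ = inner ℂ x (ContinuousLinearMap.adjoint T (T x)) := by rw [hadj]
      _ = inner ℂ (T x) (T x) := ContinuousLinearMap.adjoint_inner_right T x (T x)
      _ = (‖T x‖ : ℂ) ^ 2 := inner_self_eq_norm_sq_to_K (T x)
  have hnorm : ∀ x : H, ‖E x‖ ^ 2 = ‖x‖ ^ 2 - ‖D x‖ ^ 2 := by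
    intro x
    have h1 := hsq E hEsa x
    have h2 := hsq D hDsa x
    rw [key, ContinuousLinearMap.sub_apply, ContinuousLinearMap.one_apply,
      inner_sub_right, h2, inner_self_eq_norm_sq_to_K] at h1
    have : ((‖x‖ ^ 2 - ‖D x‖ ^ 2 : ℝ) : ℂ) = ((‖E x‖ ^ 2 : ℝ) : ℂ) := by
      push_cast; exact h1
    exact_mod_cast this.symm
  have hPfix : ∀ x ∈ LinearMap.range (P : H →ₗ[ℂ] H), P x = x := by
    rintro x ⟨y, rfl⟩
    have := congrArg (fun T : H →L[ℂ] H => T y) hPm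
    simpa [ContinuousLinearMap.mul_apply] using this
  have hQfix : ∀ x ∈ LinearMap.range (Q : H →ₗ[ℂ] H), Q x = x := by
    rintro x ⟨y, rfl⟩
    have := congrArg (fun T : H →L[ℂ] H => T y) hQm
    simpa [ContinuousLinearMap.mul_apply] using this
  tfae_have 1 → 3 := by
    intro h
    obtain ⟨u, hu⟩ := h
    have hinv : ∀ x : H, (↑u⁻¹ : H →L[ℂ] H) (D x) = x := by
      intro x
      have h1 : (↑u⁻¹ * ↑u : H →L[ℂ] H) = 1 := u.inv_mul
      rw [hu] at h1
      have := congrArg (fun T : H →L[ℂ] H => T x) h1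
      simpa [ContinuousLinearMap.mul_apply] using this
    have hsurj : ∀ x : H, D ((↑u⁻¹ : H →L[ℂ] H) x) = x := by
      intro x
      have h1 : (↑u * ↑u⁻¹ : H →L[ℂ] H) = 1 := u.mul_inv
      rw [hu] at h1
      have := congrArg (fun T : H →L[ℂ] H => T x) h1
      simpa [ContinuousLinearMap.mul_apply] using this
    constructor
    · rw [Submodule.disjoint_def]
      intro x hxP hxQ
      have hDx : D x = 0 := by
        rw [hD, ContinuousLinearMap.sub_apply, hPfix x hxP, hQfix x hxQ, sub_self]
      have := hinv x
      rw [hDx, map_zero] at this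
      exact this.symm
    · rw [codisjoint_iff, eq_top_iff]
      intro x _
      refine Submodule.mem_sup.mpr ⟨P ((↑u⁻¹ : H →L[ℂ] H) x), ⟨_, rfl⟩,
        -(Q ((↑u⁻¹ : H →L[ℂ] H) x)), neg_mem ⟨_, rfl⟩, ?_⟩
      have := hsurj x
      rw [hD, ContinuousLinearMap.sub_apply] at this
      simpa [sub_eq_add_neg] using this
  tfae_have 3 → 1 := by
    intro h
    have hPcl : IsClosed ((LinearMap.range (P : H →ₗ[ℂ] H) : Submodule ℂ H) : Set H) := by
      have : (LinearMap.range (P : H →ₗ[ℂ] H) : Submodule ℂ H) = LinearMap.ker ((1 - P : H →L[ℂ] H) : H →ₗ[ℂ] H) := by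
        ext x
        constructor
        · rintro ⟨y, rfl⟩
          simp only [LinearMap.mem_ker, ContinuousLinearMap.coe_coe, ContinuousLinearMap.coe_sub', Pi.sub_apply,
            ContinuousLinearMap.one_apply]
          rw [hPfix (P y) ⟨y, rfl⟩, sub_self]
        · intro hx
          have : x - P x = 0 := by
            simpa [ContinuousLinearMap.coe_sub', ContinuousLinearMap.one_apply] using hx
          exact ⟨x, (sub_eq_zero.mp this).symm⟩
      rw [this]
      exact ContinuousLinearMap.isClosed_ker _
    have hQcl : IsClosed ((LinearMap.range (Q : H →ₗ[ℂ] H) : Submodule ℂ H) : Set H) := by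
      have : (LinearMap.range (Q : H →ₗ[ℂ] H) : Submodule ℂ H) = LinearMap.ker ((1 - Q : H →L[ℂ] H) : H →ₗ[ℂ] H) := by
        ext x
        constructor
        · rintro ⟨y, rfl⟩
          simp only [LinearMap.mem_ker, ContinuousLinearMap.coe_coe, ContinuousLinearMap.coe_sub', Pi.sub_apply,
            ContinuousLinearMap.one_apply]
          rw [hQfix (Q y) ⟨y, rfl⟩, sub_self]
        · intro hx
          have : x - Q x = 0 := by
            simpa [ContinuousLinearMap.coe_sub', ContinuousLinearMap.one_apply] using hx
          exact ⟨x, (sub_eq_zero.mp this).symm⟩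
      rw [this]
      exact ContinuousLinearMap.isClosed_ker _
    set M := (LinearMap.range (P : H →ₗ[ℂ] H) : Submodule ℂ H)
    set N := (LinearMap.range (Q : H →ₗ[ℂ] H) : Submodule ℂ H)
    let F0 : H →L[ℂ] M := M.linearProjOfClosedCompl N h hPcl hQcl
    let F : H →L[ℂ] H := M.subtypeL.comp F0
    have hF_left : ∀ x ∈ M, F x = x := by
      intro x hx
      show (F0 x : H) = x
      have : F0 x = ⟨x, hx⟩ := Submodule.linearProjOfIsCompl_apply_left h ⟨x, hx⟩
      rw [this]
    have hF_right : ∀ x ∈ N, F x = 0 := by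
      intro x hx
      show (F0 x : H) = 0
      have : F0 x = 0 := Submodule.linearProjOfIsCompl_apply_right' h hx
      rw [this]; rfl
    have hF_mem : ∀ x : H, F x ∈ M := fun x => (F0 x).2
    have hF_sub_mem : ∀ x : H, x - F x ∈ N := by
      intro x
      have hx : x ∈ M ⊔ N := by rw [h.sup_eq_top]; trivial
      obtain ⟨y, hy, z, hz, hyz⟩ := Submodule.mem_sup.mp hx
      have hFx : F x = y := by
        rw [← hyz, map_add, hF_left y hy, hF_right z hz, add_zero]
      rw [hFx, ← hyz]
      simpa using hz
    -- operator identities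
    have hPF : P * F = F := by
      ext x
      exact hPfix (F x) (hF_mem x)
    have hFP : F * P = P := by
      ext x
      exact hF_left (P x) ⟨x, rfl⟩
    have hFQ : F * Q = 0 := by
      ext x
      exact hF_right (Q x) ⟨x, rfl⟩
    have hQF : Q * F = Q + F - 1 := by
      ext x
      have h1 := hQfix (x - F x) (hF_sub_mem x)
      rw [map_sub] at h1
      have : Q (F x) = Q x - (x - F x) := by rw [← h1]; abel
      simp only [ContinuousLinearMap.mul_apply, ContinuousLinearMap.sub_apply,
        ContinuousLinearMap.add_apply, ContinuousLinearMap.one_apply, this]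
      abel
    have hPFs : P * star F = P := by
      have h1 := congrArg star hFP
      rwa [star_mul, hP2.star_eq] at h1
    have hQFs : Q * star F = 0 := by
      have h1 := congrArg star hFQ
      rwa [star_mul, star_zero, hQ2.star_eq] at h1
    set A : H →L[ℂ] H := F + star F - 1 with hA
    have hDA : D * A = 1 := by
      rw [hD, hA]
      simp only [sub_mul, mul_add, mul_sub, mul_one, hPF, hPFs, hQF, hQFs]
      abel
    have hAD : A * D = 1 := by
      have h1 := congrArg star hDA
      rw [star_mul, star_one, hDsa.star_eq, hA, star_sub, star_add, star_star,
        star_one] at h1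
      rwa [hA, add_comm F (star F)]
    exact ⟨⟨D, A, hDA, hAD⟩, rfl⟩
  tfae_have 1 → 2 := by
    intro h
    rcases subsingleton_or_nontrivial H with hs | hn
    · have hE0 : E = 0 := by ext x; exact Subsingleton.elim _ _
      rw [hE0, norm_zero]; norm_num
    · obtain ⟨u, hu⟩ := h
      set c := ‖(↑u⁻¹ : H →L[ℂ] H)‖ with hc
      have hone : (1 : H →L[ℂ] H) ≠ 0 := by
        obtain ⟨x, hx⟩ := exists_ne (0 : H)
        intro h01
        apply hx
        have := congrArg (fun T : H →L[ℂ] H => T x) h01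
        simpa using this
      have hc0 : 0 < c := by
        rw [hc, norm_pos_iff]
        intro h0
        apply hone
        have h1 : (↑u⁻¹ * ↑u : H →L[ℂ] H) = 1 := u.inv_mul
        rw [h0, zero_mul] at h1
        exact h1.symm
      have hlow : ∀ x : H, ‖x‖ ≤ c * ‖D x‖ := by
        intro x
        have h1 : (↑u⁻¹ * ↑u : H →L[ℂ] H) = 1 := u.inv_mul
        rw [hu] at h1
        have h2 : (↑u⁻¹ : H →L[ℂ] H) (D x) = x := by
          have := congrArg (fun T : H →L[ℂ] H => T x) h1
          simpa [ContinuousLinearMap.mul_apply] using this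
        calc ‖x‖ = ‖(↑u⁻¹ : H →L[ℂ] H) (D x)‖ := by rw [h2]
          _ ≤ c * ‖D x‖ := ContinuousLinearMap.le_opNorm _ _
      have hEx : ∀ x : H, ‖E x‖ ^ 2 ≤ (1 - 1 / c ^ 2) * ‖x‖ ^ 2 := by
        intro x
        have h1 : ‖x‖ ^ 2 ≤ c ^ 2 * ‖D x‖ ^ 2 := by
          nlinarith [hlow x, norm_nonneg (D x), norm_nonneg x]
        have h2 := hnorm x
        have hc2 : 0 < c ^ 2 := pow_pos hc0 2
        have h3 : 1 / c ^ 2 * ‖x‖ ^ 2 ≤ ‖D x‖ ^ 2 := by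
          rw [div_mul_eq_mul_div, one_mul, div_le_iff₀ hc2]
          linarith
        rw [h2, sub_mul, one_mul]
        linarith
      obtain ⟨x0, hx0⟩ := exists_ne (0 : H)
      have hx0' : 0 < ‖x0‖ := norm_pos_iff.mpr hx0
      have hk0 : 0 ≤ 1 - 1 / c ^ 2 := by
        nlinarith [hEx x0, sq_nonneg ‖E x0‖, pow_pos hx0' 2]
      have hbound : ‖E‖ ≤ Real.sqrt (1 - 1 / c ^ 2) := by
        apply ContinuousLinearMap.opNorm_le_bound _ (Real.sqrt_nonneg _)
        intro x
        have h2 : ‖E x‖ ^ 2 ≤ (Real.sqrt (1 - 1 / c ^ 2) * ‖x‖) ^ 2 := by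
          rw [mul_pow, Real.sq_sqrt hk0]
          exact hEx x
        calc ‖E x‖ = Real.sqrt (‖E x‖ ^ 2) := (Real.sqrt_sq (norm_nonneg _)).symm
          _ ≤ Real.sqrt ((Real.sqrt (1 - 1 / c ^ 2) * ‖x‖) ^ 2) := Real.sqrt_le_sqrt h2
          _ = Real.sqrt (1 - 1 / c ^ 2) * ‖x‖ :=
              Real.sqrt_sq (mul_nonneg (Real.sqrt_nonneg _) (norm_nonneg _))
      have hlt : Real.sqrt (1 - 1 / c ^ 2) < 1 := by
        have h1 : 1 - 1 / c ^ 2 < 1 := by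
          have : 0 < 1 / c ^ 2 := div_pos one_pos (pow_pos hc0 2)
          linarith
        calc Real.sqrt (1 - 1 / c ^ 2) < Real.sqrt 1 := Real.sqrt_lt_sqrt hk0 h1
          _ = 1 := Real.sqrt_one
      linarith
  tfae_have 2 → 1 := by
    intro h
    have hEE : ‖E * E‖ < 1 := by
      have h1 : ‖E * E‖ ≤ ‖E‖ * ‖E‖ := norm_mul_le _ _
      nlinarith [norm_nonneg E]
    have hu : IsUnit (1 - E * E) := (Units.oneSub (E * E) hEE).isUnit
    have hDD : D * D = 1 - E * E := by rw [key, sub_sub_cancel]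
    rw [← hDD] at hu
    obtain ⟨v, hv⟩ := hu
    set b := (↑v⁻¹ : H →L[ℂ] H) with hb
    have h1 : D * D * b = 1 := by rw [← hv]; exact v.mul_inv
    have h2 : b * (D * D) = 1 := by rw [← hv]; exact v.inv_mul
    have hDDb : D * (D * b) = 1 := by rw [← mul_assoc]; exact h1
    have hcomm : b * D = D * b := by
      have h3 : b * D * (D * (D * b)) = b * (D * D) * (D * b) := by noncomm_ring
      rw [hDDb, h2, mul_one, one_mul] at h3
      exact h3
    refine ⟨⟨D, D * b, hDDb, ?_⟩, rfl⟩
    rw [← hcomm, mul_assoc]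
    exact h2
  tfae_finish
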